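/- Let C be a connected configuration, let P = P(x,y,z_b,z_t) be a non-cut pillar of C, and suppose that on some side (x',y') of P the topmost adjacent pillar P' = P'(x',y',z'_b,z'_t) satisfies z'_t ≤ z_t − 2. Then replacing the head (x,y,z_t) of P by (x',y',z_t−1) is a convex transition move of C, and the resulting configuration C' is connected and satisfies Z_{C'} = Z_C − 1; moreover, if C is nonnegative then so is C'. -/

import Mathlib

/-- A cube is a point of `ℤ³`. -/
abbrev Cube : Type := ℤ × ℤ × ℤ

/-- Two cubes are adjacent if they lie at `L1`-distance `1`. -/
def cubeAdj (a b : Cube) : Prop :=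
  (a.1 - b.1).natAbs + (a.2.1 - b.2.1).natAbs + (a.2.2 - b.2.2).natAbs = 1

lemma cubeAdj_symm {a b : Cube} (h : cubeAdj a b) : cubeAdj b a := by
  unfold cubeAdj at h ⊢
  omega

lemma cubeAdj_irrefl (a : Cube) : ¬ cubeAdj a a := by
  unfold cubeAdj; simp

/-- The graph `G_S` on a set of cubes `S`, connecting adjacent cubes of `S`. -/
def gph (S : Finset Cube) : SimpleGraph Cube where
  Adj a b := a ∈ S ∧ b ∈ S ∧ cubeAdj a b
  symm := by
    constructor
    rintro a b ⟨ha, hb, h⟩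
    exact ⟨hb, ha, cubeAdj_symm h⟩
  loopless := by
    constructor
    rintro a ⟨-, -, h⟩
    exact cubeAdj_irrefl a h

/-- A set of cubes is connected if it is nonempty and all its cubes are joined by
paths of adjacent cubes inside the set. -/
def Conn (S : Finset Cube) : Prop :=
  S.Nonempty ∧ ∀ a ∈ S, ∀ b ∈ S, (gph S).Reachable a b

/-- Connected or empty. -/
def ConnOrEmpty (S : Finset Cube) : Prop := S = ∅ ∨ Conn S

/-- A configuration is nonnegative if all coordinates of all its cubes are `≥ 0`. -/
def Nonneg (C : Finset Cube) : Prop := ∀ c ∈ C, 0 ≤ c.1 ∧ 0 ≤ c.2.1 ∧ 0 ≤ c.2.2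

/-- `Sq4 p q r s` : the four points form a 4-cycle `p-q-r-s-p` in the unit-distance
graph on `ℤ³`. -/
def Sq4 (p q r s : Cube) : Prop :=
  cubeAdj p q ∧ cubeAdj q r ∧ cubeAdj r s ∧ cubeAdj s p ∧ p ≠ r ∧ q ≠ s

/-- Slide: there is a 4-cycle `c, c', r, s` with exactly the three vertices
other than `c'` in `C` (and `c` adjacent to `c'`). -/
def IsSlide (C : Finset Cube) (c c' : Cube) : Prop :=
  c ∈ C ∧ c' ∉ C ∧ ∃ r s, Sq4 c c' r s ∧ r ∈ C ∧ s ∈ C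

/-- Convex transition: there is a 4-cycle `c, q, c', s` with exactly two
(adjacent) vertices in `C`, one of them `c`, and `c'` opposite to `c`. -/
def IsConvexTrans (C : Finset Cube) (c c' : Cube) : Prop :=
  c ∈ C ∧ c' ∉ C ∧ ∃ q s, Sq4 c q c' s ∧ ((q ∈ C ∧ s ∉ C) ∨ (s ∈ C ∧ q ∉ C))

/-- A move replaces `c ∈ C` by `c' ∉ C` via a slide or a convex transition,
such that `C \ {c}` is connected. -/
def IsMoveVia (C : Finset Cube) (c c' : Cube) : Prop :=
  (IsSlide C c c' ∨ IsConvexTrans C c c') ∧ Conn (C.erase c)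

/-- `C'` is obtained from `C` by a single move. -/
def MoveStep (C C' : Finset Cube) : Prop :=
  ∃ c c', IsMoveVia C c c' ∧ C' = insert c' (C.erase c)

/-- `MoveSeq C m C'` : a sequence of `m` moves from `C` to `C'`, each resulting in a
connected configuration. -/
def MoveSeq (C : Finset Cube) (m : ℕ) (C' : Finset Cube) : Prop :=
  ∃ f : ℕ → Finset Cube, f 0 = C ∧ f m = C' ∧
    ∀ i < m, MoveStep (f i) (f (i + 1)) ∧ Conn (f (i + 1))

/-- Sum of `x`-coordinates of `C`. -/
def Xsum (C : Finset Cube) : ℤ := ∑ c ∈ C, c.1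

/-- Sum of `y`-coordinates of `C`. -/
def Ysum (C : Finset Cube) : ℤ := ∑ c ∈ C, c.2.1

/-- Sum of `z`-coordinates of `C`. -/
def Zsum (C : Finset Cube) : ℤ := ∑ c ∈ C, c.2.2

/-- A cube `c` is finished in `C` if the whole box spanned by the origin and `c`
is contained in `C`. -/
def FinishedCube (C : Finset Cube) (c : Cube) : Prop :=
  ∀ p : Cube, 0 ≤ p.1 → p.1 ≤ c.1 → 0 ≤ p.2.1 → p.2.1 ≤ c.2.1 →
    0 ≤ p.2.2 → p.2.2 ≤ c.2.2 → p ∈ C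

/-- A finished configuration: nonnegative and all cubes finished. -/
def FinishedConfig (C : Finset Cube) : Prop :=
  Nonneg C ∧ ∀ c ∈ C, FinishedCube C c

/-- The weight of a cube. -/
def weight (c : Cube) : ℤ :=
  if 1 < c.2.2 then 5
  else if c.2.2 = 1 then 4
  else if 1 < c.2.1 then 3
  else if c.2.1 = 1 then 2
  else 1

/-- The potential of a cube `(x, y, z)` is `w • (x + 2y + 4z)`. -/
def pot (c : Cube) : ℤ := weight c * (c.1 + 2 * c.2.1 + 4 * c.2.2)

/-- The potential of a configuration. -/
def Pot (C : Finset Cube) : ℤ := ∑ c ∈ C, pot c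

/-- `SafeSeq C K` : `C` admits a sequence of `m ≥ 1` moves, each resulting in a connected
configuration, ending in a nonnegative configuration `C'` of strictly smaller potential,
with `m ≤ K • (Π_C - Π_{C'})`. -/
def SafeSeq (C : Finset Cube) (K : ℕ) : Prop :=
  ∃ (m : ℕ) (C' : Finset Cube), 1 ≤ m ∧ MoveSeq C m C' ∧ Nonneg C' ∧
    Pot C' < Pot C ∧ (m : ℤ) ≤ (K : ℤ) * (Pot C - Pot C')

/-- The set of cubes `{x} × {y} × {z_b, …, z_t}`. -/
noncomputable def pillarSet (x y zb zt : ℤ) : Finset Cube :=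
  (Finset.Icc zb zt).image fun z => (x, y, z)

/-- `P(x,y,z_b,z_t)` is a subpillar of `S`. -/
def IsSubpillar (S : Finset Cube) (x y zb zt : ℤ) : Prop :=
  zb ≤ zt ∧ pillarSet x y zb zt ⊆ S

/-- A pillar of `S`: a maximal subpillar. -/
def IsPillar (S : Finset Cube) (x y zb zt : ℤ) : Prop :=
  IsSubpillar S x y zb zt ∧ (x, y, zb - 1) ∉ S ∧ (x, y, zt + 1) ∉ S

/-- `(x', y')` is one of the four sides of the column `(x, y)`. -/
def IsSide (x y x' y' : ℤ) : Prop :=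
  (x' = x - 1 ∧ y' = y) ∨ (x' = x + 1 ∧ y' = y) ∨
  (x' = x ∧ y' = y - 1) ∨ (x' = x ∧ y' = y + 1)

/-- `P'(x',y',z'_b,z'_t)` is a pillar of `C` lying on a side of `P(x,y,z_b,z_t)`
and adjacent to it. -/
def AdjPillar (C : Finset Cube) (x y zb zt x' y' z'b z't : ℤ) : Prop :=
  IsPillar C x' y' z'b z't ∧ IsSide x y x' y' ∧ z'b ≤ zt ∧ zb ≤ z't

/-- A cut cube of `C`: a cube whose removal disconnects `C`. -/
def IsCutCube (C : Finset Cube) (c : Cube) : Prop :=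
  c ∈ C ∧ ¬ Conn (C.erase c)

/-- Condition (a): on some side the topmost adjacent pillar
`P'` satisfies `z'_t ≤ z_t - 2`. -/
def CondA (C : Finset Cube) (x y zb zt : ℤ) : Prop :=
  ∃ x' y' z'b z't, AdjPillar C x y zb zt x' y' z'b z't ∧
    (∀ z''b z''t, AdjPillar C x y zb zt x' y' z''b z''t → z''t ≤ z't) ∧
    z't ≤ zt - 2

/-- Condition (b): some adjacent pillar `P'` has `z'_b > z_b` and
`(x, y, z'_b - 1)` is not a cut cube of `C`. -/
def CondB (C : Finset Cube) (x y zb zt : ℤ) : Prop :=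
  ∃ x' y' z'b z't, AdjPillar C x y zb zt x' y' z'b z't ∧ zb < z'b ∧
    ¬ IsCutCube C (x, y, z'b - 1)

/-- Condition (c): `(x, y, z_b - 1) ∉ C` and some adjacent pillar has `z'_b < z_b`. -/
def CondC (C : Finset Cube) (x y zb zt : ℤ) : Prop :=
  (x, y, zb - 1) ∉ C ∧
  ∃ x' y' z'b z't, AdjPillar C x y zb zt x' y' z'b z't ∧ z'b < zb

/-- Condition (d): `(x, y, z_b - 1) ∉ C` and on some side the bottommost adjacent
pillar `P'` satisfies `z'_b = z_b > 0`. -/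
def CondD (C : Finset Cube) (x y zb zt : ℤ) : Prop :=
  (x, y, zb - 1) ∉ C ∧
  ∃ x' y' z'b z't, AdjPillar C x y zb zt x' y' z'b z't ∧
    (∀ z''b z''t, AdjPillar C x y zb zt x' y' z''b z''t → z'b ≤ z''b) ∧
    z'b = zb ∧ 0 < zb

/-- Condition (e): at most one adjacent pillar on each side; there is an adjacent
pillar `P'` with `z'_b > z_b`, minimal such; and some other side `(x'', y'')` has
`(x'', y'', z_b) ∉ C`. -/
def CondE (C : Finset Cube) (x y zb zt : ℤ) : Prop :=
  (∀ x' y' z'b z't z''b z''t, AdjPillar C x y zb zt x' y' z'b z't →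
      AdjPillar C x y zb zt x' y' z''b z''t → z'b = z''b ∧ z't = z''t) ∧
  ∃ x' y' z'b z't, AdjPillar C x y zb zt x' y' z'b z't ∧ zb < z'b ∧
    (∀ x'' y'' z''b z''t, AdjPillar C x y zb zt x'' y'' z''b z''t →
      zb < z''b → z'b ≤ z''b) ∧
    ∃ x'' y'', IsSide x y x'' y'' ∧ (x'', y'') ≠ (x', y') ∧ (x'', y'', zb) ∉ C

/-- No non-cut subpillar of `C` satisfies any of the conditions (a)--(e). -/
def NoCondAE (C : Finset Cube) : Prop :=
  ∀ x y zb zt, IsSubpillar C x y zb zt →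
    ConnOrEmpty (C \ pillarSet x y zb zt) →
    ¬ (CondA C x y zb zt ∨ CondB C x y zb zt ∨ CondC C x y zb zt ∨
       CondD C x y zb zt ∨ CondE C x y zb zt)

/-- Two sets of cubes are adjacent if some cube of one is adjacent to a cube of the other. -/
def AdjSets (S T : Finset Cube) : Prop := ∃ a ∈ S, ∃ b ∈ T, cubeAdj a b

/-- The cubes of `C` with `z > 0`. -/
def Cpos (C : Finset Cube) : Finset Cube := C.filter fun c => 0 < c.2.2

/-- The cubes of `C` with `z = 0`. -/
def Czero (C : Finset Cube) : Finset Cube := C.filter fun c => c.2.2 = 0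

/-- `H` is a connected component of `G_S`: nonempty, connected and closed under
adjacency within `S`. -/
def IsCompOf (S H : Finset Cube) : Prop :=
  H ⊆ S ∧ Conn H ∧ ∀ a ∈ H, ∀ b ∈ S, cubeAdj a b → b ∈ H

/-- A high component of `C`: a connected component of `G_{C_{>0}}`. -/
def IsHighComp (C H : Finset Cube) : Prop := IsCompOf (Cpos C) H

/-- A low component of `C`: a connected component of `G_{C_0}`. -/
def IsLowComp (C L : Finset Cube) : Prop := IsCompOf (Czero C) L

/-- A move of type (f): it moves a cube with `z > 0`, strictly decreases the
potential, and results in a nonnegative configuration. -/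
def MoveTypeF (C : Finset Cube) : Prop :=
  ∃ c c', IsMoveVia C c c' ∧ 0 < c.2.2 ∧
    Nonneg (insert c' (C.erase c)) ∧ Pot (insert c' (C.erase c)) < Pot C

/-- `R` is the root: the low component containing the origin if `(0,0,0) ∈ C`,
an arbitrary low component otherwise. -/
def IsRoot (C R : Finset Cube) : Prop :=
  IsLowComp C R ∧ (((0 : ℤ), (0 : ℤ), (0 : ℤ)) ∈ C → ((0 : ℤ), (0 : ℤ), (0 : ℤ)) ∈ R)

/-- A clear low component `L` (w.r.t. root `R`): `C \ L` is connected, `L ≠ R`, and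
some pillar of `C \ L` adjacent to `L` is non-cut in `C \ L`. -/
def IsClear (C R L : Finset Cube) : Prop :=
  IsLowComp C L ∧ Conn (C \ L) ∧ L ≠ R ∧
  ∃ x y zb zt, IsPillar (C \ L) x y zb zt ∧ AdjSets (pillarSet x y zb zt) L ∧
    ConnOrEmpty ((C \ L) \ pillarSet x y zb zt)

/-- `P(x,y,z_b,z_t)` is a clearing pillar of the clear low component `L`. -/
def IsClearingPillar (C R L : Finset Cube) (x y zb zt : ℤ) : Prop :=
  IsClear C R L ∧ IsPillar (C \ L) x y zb zt ∧ AdjSets (pillarSet x y zb zt) L ∧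
    ConnOrEmpty ((C \ L) \ pillarSet x y zb zt)

/-- A move of type (g): it moves a cube of some clear low component, strictly
decreases the potential, and results in a nonnegative configuration. -/
def MoveTypeG (C R : Finset Cube) : Prop :=
  ∃ L, IsClear C R L ∧ ∃ c c', IsMoveVia C c c' ∧ c ∈ L ∧
    Nonneg (insert c' (C.erase c)) ∧ Pot (insert c' (C.erase c)) < Pot C

/-- The low-high graph `LH_C`: its vertices are the low and high components of `C`,
with edges between adjacent low and high components. -/
def LH (C : Finset Cube) : SimpleGraph (Finset Cube) where
  Adj S T := S ≠ T ∧ AdjSets S T ∧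
    ((IsLowComp C S ∧ IsHighComp C T) ∨ (IsHighComp C S ∧ IsLowComp C T))
  symm := by
    constructor
    rintro S T ⟨hne, ⟨a, ha, b, hb, hab⟩, h⟩
    exact ⟨hne.symm, ⟨b, hb, a, ha, cubeAdj_symm hab⟩, h.symm.imp And.symm And.symm⟩
  loopless := ⟨fun S h => h.1 rfl⟩

/-- `c` lies in the bounding box of `C`. -/
def InBBox (C : Finset Cube) (c : Cube) : Prop :=
  (∃ a ∈ C, a.1 ≤ c.1) ∧ (∃ a ∈ C, c.1 ≤ a.1) ∧
  (∃ a ∈ C, a.2.1 ≤ c.2.1) ∧ (∃ a ∈ C, c.2.1 ≤ a.2.1) ∧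
  (∃ a ∈ C, a.2.2 ≤ c.2.2) ∧ (∃ a ∈ C, c.2.2 ≤ a.2.2)

-- AUX
lemma mem_pillarSet {x y zb zt : ℤ} {c : Cube} :
    c ∈ pillarSet x y zb zt ↔ c.1 = x ∧ c.2.1 = y ∧ zb ≤ c.2.2 ∧ c.2.2 ≤ zt := by
  obtain ⟨cx, cy, cz⟩ := c
  simp [pillarSet, Prod.ext_iff]
  aesop

lemma gph_le {S T : Finset Cube} (h : S ⊆ T) : gph S ≤ gph T :=
  fun _ _ ⟨ha, hb, hadj⟩ => ⟨h ha, h hb, hadj⟩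

lemma pillar_reach (S : Finset Cube) (x y zb zt : ℤ) (hsub : pillarSet x y zb zt ⊆ S) :
    ∀ z, zb ≤ z → z ≤ zt → (gph S).Reachable (x, y, zb) (x, y, z) := by
  intro z hz hle
  refine Int.le_induction (motive := fun n _ => n ≤ zt → (gph S).Reachable (x, y, zb) (x, y, n))
    (fun _ => SimpleGraph.Reachable.refl _) ?_ z hz hle
  intro n hn ih hle2
  have h1 : ((x, y, n) : Cube) ∈ S := hsub (by simp [mem_pillarSet]; omega)
  have h2 : ((x, y, n + 1) : Cube) ∈ S := hsub (by simp [mem_pillarSet]; omega)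
  have hadj : (gph S).Adj (x, y, n) (x, y, n + 1) :=
    ⟨h1, h2, by simp [cubeAdj]⟩
  exact (ih (by omega)).trans hadj.reachable

lemma conn_insert {S : Finset Cube} (hS : Conn S) {a s : Cube} (hs : s ∈ S)
    (hadj : cubeAdj a s) : Conn (insert a S) := by
  obtain ⟨hne, hreach⟩ := hS
  refine ⟨⟨a, Finset.mem_insert_self _ _⟩, ?_⟩
  have hmono : gph S ≤ gph (insert a S) := gph_le (Finset.subset_insert a S)
  have hedge : (gph (insert a S)).Adj a s :=
    ⟨Finset.mem_insert_self _ _, Finset.mem_insert_of_mem hs, hadj⟩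
  have key : ∀ u ∈ insert a S, (gph (insert a S)).Reachable u s := by
    intro u hu
    rcases Finset.mem_insert.1 hu with rfl | hu
    · exact hedge.reachable
    · exact (hreach u hu s hs).mono hmono
  exact fun u hu v hv => (key u hu).trans (key v hv).symm

lemma exists_pillar_through (C : Finset Cube) {a b z : ℤ} (h : ((a, b, z) : Cube) ∈ C) :
    ∃ wb wt, wb ≤ z ∧ z ≤ wt ∧ IsPillar C a b wb wt := by
  classical
  have hne : C.Nonempty := ⟨_, h⟩
  obtain ⟨M, hMle⟩ : ∃ M, ∀ c ∈ C, c.2.2 ≤ M :=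
    ⟨(C.image fun c => c.2.2).max' (hne.image _), fun c hc =>
      Finset.le_max' _ _ (Finset.mem_image_of_mem (fun c => c.2.2) hc)⟩
  obtain ⟨m, hmle⟩ : ∃ m, ∀ c ∈ C, m ≤ c.2.2 :=
    ⟨(C.image fun c => c.2.2).min' (hne.image _), fun c hc =>
      Finset.min'_le _ _ (Finset.mem_image_of_mem (fun c => c.2.2) hc)⟩
  obtain ⟨wt, ⟨hwt1, hwt2⟩, hwtle⟩ :=
    Int.exists_least_of_bdd (P := fun w => z ≤ w ∧ ((a, b, w + 1) : Cube) ∉ C)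
      ⟨z, fun w hw => hw.1⟩
      ⟨max z M, le_max_left _ _, fun hc => by have := hMle _ hc; simp at this⟩
  obtain ⟨wb, ⟨hwb1, hwb2⟩, hwble⟩ :=
    Int.exists_greatest_of_bdd (P := fun w => w ≤ z ∧ ((a, b, w - 1) : Cube) ∉ C)
      ⟨z, fun w hw => hw.1⟩
      ⟨min z m, min_le_left _ _, fun hc => by have := hmle _ hc; simp at this⟩
  have fill : ∀ u, wb ≤ u → u ≤ wt → ((a, b, u) : Cube) ∈ C := by
    intro u hu1 hu2
    by_contra hu
    rcases le_or_gt u z with hle | hlt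
    · rcases eq_or_lt_of_le hle with rfl | hlt'
      · exact hu h
      · have := hwble (u + 1) ⟨by omega, by simpa using hu⟩; omega
    · have := hwtle (u - 1) ⟨by omega, by simpa using hu⟩; omega
  refine ⟨wb, wt, hwb1, hwt1, ⟨⟨by omega, ?_⟩, hwb2, hwt2⟩⟩
  intro c hc
  obtain ⟨cx, cy, cz⟩ := c
  rw [mem_pillarSet] at hc
  simp at hc
  obtain ⟨rfl, rfl, h1, h2⟩ := hc
  exact fill _ h1 h2

lemma mem_pillarSet' {x y zb zt z : ℤ} (h1 : zb ≤ z) (h2 : z ≤ zt) :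
    ((x, y, z) : Cube) ∈ pillarSet x y zb zt := mem_pillarSet.2 ⟨rfl, rfl, h1, h2⟩

lemma conn_pillarSet (x y zb zt : ℤ) (h : zb ≤ zt) : Conn (pillarSet x y zb zt) := by
  refine ⟨⟨(x, y, zb), mem_pillarSet' le_rfl h⟩, ?_⟩
  intro a ha b hb
  obtain ⟨ax, ay, az⟩ := a
  obtain ⟨bx, b2, bz⟩ := b
  rw [mem_pillarSet] at ha hb
  simp at ha hb
  obtain ⟨rfl, rfl, h1, h2⟩ := ha
  obtain ⟨rfl, rfl, h3, h4⟩ := hb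
  exact (pillar_reach _ _ _ zb zt subset_rfl az h1 h2).symm.trans
    (pillar_reach _ _ _ zb zt subset_rfl bz h3 h4)

/-- move (a): if the topmost adjacent pillar on some side of a
non-cut pillar `P` ends at height at most `z_t - 2`, then moving the head of `P` to
`(x', y', z_t - 1)` is a convex transition, the result is connected, and the sum of
`z`-coordinates drops by one; nonnegativity is preserved. -/
theorem move_type_a (C : Finset Cube) (hC : Conn C)
    (x y zb zt : ℤ) (hP : IsPillar C x y zb zt)
    (hnc : ConnOrEmpty (C \ pillarSet x y zb zt))
    (x' y' z'b z't : ℤ)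
    (hadj : AdjPillar C x y zb zt x' y' z'b z't)
    (htop : ∀ z''b z''t, AdjPillar C x y zb zt x' y' z''b z''t → z''t ≤ z't)
    (hlow : z't ≤ zt - 2) :
    IsConvexTrans C (x, y, zt) (x', y', zt - 1) ∧
    Conn (C.erase (x, y, zt)) ∧
    Conn (insert (x', y', zt - 1) (C.erase (x, y, zt))) ∧
    Zsum (insert (x', y', zt - 1) (C.erase (x, y, zt))) = Zsum C - 1 ∧
    (Nonneg C → Nonneg (insert (x', y', zt - 1) (C.erase (x, y, zt)))) := by
  classical
  obtain ⟨⟨hSle, hSsub⟩, hbot, htopP⟩ := hP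
  obtain ⟨hP', hside, hz'le, hzble⟩ := hadj
  have hz'bt : z'b ≤ z't := hP'.1.1
  have hzb2 : zb ≤ zt - 2 := le_trans hzble hlow
  have notC : ∀ z : ℤ, z't < z → z ≤ zt → ((x', y', z) : Cube) ∉ C := by
    intro z h1 h2 hmem
    obtain ⟨wb, wt, hwb, hwt, hpil⟩ := exists_pillar_through C hmem
    have hadj' : AdjPillar C x y zb zt x' y' wb wt := ⟨hpil, hside, by omega, by omega⟩
    have := htop wb wt hadj'
    omega
  have hq : ((x', y', zt) : Cube) ∉ C := notC zt (by omega) le_rfl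
  have hc' : ((x', y', zt - 1) : Cube) ∉ C := notC (zt - 1) (by omega) (by omega)
  have memP : ∀ z : ℤ, zb ≤ z → z ≤ zt → ((x, y, z) : Cube) ∈ C := fun z h1 h2 =>
    hSsub (mem_pillarSet' h1 h2)
  have hc : ((x, y, zt) : Cube) ∈ C := memP zt (by omega) le_rfl
  have hs : ((x, y, zt - 1) : Cube) ∈ C := memP _ (by omega) (by omega)
  have hsadj : ∀ z : ℤ, cubeAdj (x', y', z) (x, y, z) := by
    intro z
    rcases hside with ⟨rfl, rfl⟩ | ⟨rfl, rfl⟩ | ⟨rfl, rfl⟩ | ⟨rfl, rfl⟩ <;>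
      simp [cubeAdj] <;> omega
  have hvadj : ∀ a b z : ℤ, cubeAdj (a, b, z) (a, b, z - 1) := by
    intro a b z; simp [cubeAdj]
  have hnotpil : ∀ z : ℤ, ((x', y', z) : Cube) ∉ pillarSet x y zb zt := by
    intro z hz
    rw [mem_pillarSet] at hz
    rcases hside with ⟨rfl, rfl⟩ | ⟨rfl, rfl⟩ | ⟨rfl, rfl⟩ | ⟨rfl, rfl⟩ <;>
      simp at hz <;> omega
  have hstub : pillarSet x y zb (zt - 1) ⊆ C.erase (x, y, zt) := by
    intro u hu
    obtain ⟨cx, cy, cz⟩ := u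
    rw [mem_pillarSet] at hu
    simp only at hu
    obtain ⟨rfl, rfl, h1, h2⟩ := hu
    refine Finset.mem_erase.2 ⟨?_, memP cz h1 (by omega)⟩
    intro hEq
    have h3 : cz = zt := congrArg (fun c : Cube => c.2.2) hEq
    omega
  have hz0reach : (gph (C.erase (x, y, zt))).Reachable (x, y, zb) (x, y, max zb z'b) :=
    pillar_reach _ x y zb (zt - 1) hstub _ (le_max_left _ _)
      (max_le (by omega) (by omega))
  have hconn2 : Conn (C.erase (x, y, zt)) := by
    rcases hnc with h0 | hconn
    · have hCeq : C = pillarSet x y zb zt :=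
        subset_antisymm (Finset.sdiff_eq_empty_iff_subset.1 h0) hSsub
      have herase : C.erase (x, y, zt) = pillarSet x y zb (zt - 1) := by
        ext ⟨cx, cy, cz⟩
        simp [hCeq, mem_pillarSet, Prod.ext_iff]
        omega
      rw [herase]
      exact conn_pillarSet x y zb (zt - 1) (by omega)
    · have hd : ((x', y', max zb z'b) : Cube) ∈ C :=
        hP'.1.2 (mem_pillarSet' (le_max_right _ _) (max_le hzble hz'bt))
      have hdC : ((x', y', max zb z'b) : Cube) ∈ C \ pillarSet x y zb zt :=
        Finset.mem_sdiff.2 ⟨hd, hnotpil _⟩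
      have hdE : ((x', y', max zb z'b) : Cube) ∈ C.erase (x, y, zt) := by
        refine Finset.mem_erase.2 ⟨?_, hd⟩
        have h4 : max zb z'b ≤ zt - 2 := max_le (by omega) (by omega)
        intro hEq
        have h3 : max zb z'b = zt := congrArg (fun c : Cube => c.2.2) hEq
        omega
      have heE : ((x, y, max zb z'b) : Cube) ∈ pillarSet x y zb (zt - 1) :=
        mem_pillarSet' (le_max_left _ _) (by have := max_le (show zb ≤ zt - 1 by omega) (show z'b ≤ zt - 1 by omega); omega)
      have hedge : (gph (C.erase (x, y, zt))).Adj (x', y', max zb z'b) (x, y, max zb z'b) :=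
        ⟨hdE, hstub heE, hsadj _⟩
      have hsdiffsub : C \ pillarSet x y zb zt ⊆ C.erase (x, y, zt) := by
        intro u hu
        rw [Finset.mem_sdiff] at hu
        exact Finset.mem_erase.2
          ⟨fun hEq => hu.2 (hEq ▸ mem_pillarSet' hSle le_rfl), hu.1⟩
      have key : ∀ u ∈ C.erase (x, y, zt),
          (gph (C.erase (x, y, zt))).Reachable u (x, y, zb) := by
        intro u hu
        by_cases hup : u ∈ pillarSet x y zb zt
        · obtain ⟨hne', huC⟩ := Finset.mem_erase.1 hu
          obtain ⟨cx, cy, cz⟩ := u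
          rw [mem_pillarSet] at hup
          simp only at hup
          obtain ⟨rfl, rfl, h1, h2⟩ := hup
          have h3 : cz ≤ zt - 1 := by
            rcases eq_or_lt_of_le h2 with rfl | h; · exact absurd rfl hne'
            omega
          exact (pillar_reach _ _ _ zb (zt - 1) hstub cz h1 h3).symm
        · have huD : u ∈ C \ pillarSet x y zb zt :=
            Finset.mem_sdiff.2 ⟨(Finset.mem_erase.1 hu).2, hup⟩
          have r1 := (hconn.2 u huD _ hdC).mono (gph_le hsdiffsub)
          exact (r1.trans hedge.reachable).trans hz0reach.symm
      exact ⟨⟨(x, y, zb), hstub (mem_pillarSet' le_rfl (by omega))⟩,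
        fun a ha b hb => (key a ha).trans (key b hb).symm⟩
  have hsE : ((x, y, zt - 1) : Cube) ∈ C.erase (x, y, zt) := by
    refine Finset.mem_erase.2 ⟨?_, hs⟩
    intro hEq
    have h3 : zt - 1 = zt := congrArg (fun c : Cube => c.2.2) hEq
    omega
  have hc'E : ((x', y', zt - 1) : Cube) ∉ C.erase (x, y, zt) := fun h =>
    hc' (Finset.mem_erase.1 h).2
  refine ⟨?_, hconn2, conn_insert hconn2 hsE (hsadj (zt - 1)), ?_, ?_⟩
  · refine ⟨hc, hc', (x', y', zt), (x, y, zt - 1), ?_, Or.inr ⟨hs, hq⟩⟩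
    refine ⟨cubeAdj_symm (hsadj zt), hvadj x' y' zt, hsadj (zt - 1),
      cubeAdj_symm (hvadj x y zt), ?_, ?_⟩
    · intro h
      have h3 : zt = zt - 1 := congrArg (fun c : Cube => c.2.2) h
      omega
    · intro h
      have h3 : zt = zt - 1 := congrArg (fun c : Cube => c.2.2) h
      omega
  · unfold Zsum
    rw [Finset.sum_insert hc'E, Finset.sum_erase_eq_sub hc]
    show (zt - 1) + ((∑ c ∈ C, c.2.2) - zt) = (∑ c ∈ C, c.2.2) - 1
    ring
  · intro hN u hu
    have hx' : (0 : ℤ) ≤ x' ∧ (0 : ℤ) ≤ y' := by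
      have := hN _ (hP'.1.2 (mem_pillarSet' le_rfl hz'bt))
      exact ⟨this.1, this.2.1⟩
    have hzb0 : (0 : ℤ) ≤ zb := (hN _ (memP zb le_rfl (by omega))).2.2
    rcases Finset.mem_insert.1 hu with rfl | hu
    · exact ⟨hx'.1, hx'.2, show (0 : ℤ) ≤ zt - 1 by omega⟩
    · exact hN u (Finset.mem_erase.1 hu).2
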